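/- Let (X,d) be a complete metric space, and for each i ∈ ℕ let 𝓕_i = {f_{1,i},…,f_{n_i,i}} be a finite family of Lipschitz maps on X with L_i = max_{1≤r≤n_i} Lip(f_{r,i}). Assume there is a compact set C ⊆ X with f_{r,i}(C) ⊆ C for all r, i, and that ∑_{k=1}^∞ ∏_{i=1}^k L_i < ∞. Then there exists a unique nonempty compact set P ⊆ C such that for every nonempty compact A ⊆ C the backward SFS trajectories Ψ_k(A) = F_1 ∘ F_2 ∘ ⋯ ∘ F_k(A) converge to P in the Hausdorff metric, where F_i is the Hutchinson operator of 𝓕_i. -/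

import Mathlib

open Filter Topology TopologicalSpace

/-- The backward trajectory maps `Ψ_k = F₁ ∘ F₂ ∘ ⋯ ∘ F_k` (with `0`-based indexing). -/
def backwardTraj {α : Type*} (T : ℕ → α → α) : ℕ → α → α
  | 0 => id
  | k + 1 => backwardTraj T k ∘ T k

open Set Metric
open scoped NNReal ENNReal

/-! Each Hutchinson operator `Fᵢ` is `Lᵢ`-Lipschitz for the Hausdorff metric, so `Ψ_k` is
Lipschitz with constant `∏_{i<k} Lᵢ`. Since `Ψ_{k+1} A = Ψ_k (F_k A)` with `A` and `F_k A` both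
subsets of `C`, consecutive terms of a trajectory are at most `(∏_{i<k} Lᵢ) · diam C` apart, and
summability makes the trajectory Cauchy; it converges because the nonempty compact subsets of `C`
form a compact subset of `H(X)`. Two trajectories are at most `(∏_{i<k} Lᵢ) · h(A, B)` apart, so
they share their limit. -/

theorem LipschitzWith.infEDist_image_le {α β : Type*} [PseudoEMetricSpace α]
    [PseudoEMetricSpace β] {K : ℝ≥0} {f : α → β} (hf : LipschitzWith K f) (x : α) {t : Set α}
    (ht : t.Nonempty) : infEDist (f x) (f '' t) ≤ K * infEDist x t := by
  rcases eq_or_ne K 0 with rfl | hK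
  · obtain ⟨y, hy⟩ := ht
    simpa using (infEDist_le_edist_of_mem (mem_image_of_mem f hy)).trans (hf x y)
  · rw [mul_comm, ← ENNReal.div_le_iff (by exact_mod_cast hK) ENNReal.coe_ne_top, le_infEDist]
    intro y hy
    rw [ENNReal.div_le_iff (by exact_mod_cast hK) ENNReal.coe_ne_top, mul_comm]
    exact (infEDist_le_edist_of_mem (mem_image_of_mem f hy)).trans (hf x y)

theorem LipschitzWith.hausdorffEDist_image_le {α β : Type*} [PseudoEMetricSpace α]
    [PseudoEMetricSpace β] {K : ℝ≥0} {f : α → β} (hf : LipschitzWith K f) {s t : Set α}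
    (hs : s.Nonempty) (ht : t.Nonempty) :
    hausdorffEDist (f '' s) (f '' t) ≤ K * hausdorffEDist s t := by
  refine hausdorffEDist_le_of_infEDist ?_ ?_ <;> simp only [forall_mem_image]
  · exact fun x hx => (hf.infEDist_image_le x ht).trans
      (mul_le_mul_right (infEDist_le_hausdorffEDist_of_mem hx) _)
  · exact fun x hx => (hf.infEDist_image_le x hs).trans
      (mul_le_mul_right (hausdorffEDist_comm (s := s) ▸ infEDist_le_hausdorffEDist_of_mem hx) _)

theorem TopologicalSpace.NonemptyCompacts.lipschitzWith_of_coe_eq_iUnion_image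
    {X ι : Type*} [EMetricSpace X] {K : ℝ≥0} {g : ι → X → X} (hg : ∀ r, LipschitzWith K (g r))
    {G : NonemptyCompacts X → NonemptyCompacts X}
    (hG : ∀ B : NonemptyCompacts X, (G B : Set X) = ⋃ r, g r '' B) : LipschitzWith K G := by
  intro A B
  calc hausdorffEDist (G A : Set X) (G B) ≤ ⨆ r, hausdorffEDist (g r '' A) (g r '' B) := by
        rw [hG, hG]; exact hausdorffEDist_iUnion_le
    _ ≤ K * edist A B := iSup_le fun r => (hg r).hausdorffEDist_image_le A.nonempty B.nonempty

section BackwardTrajectory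

variable {α : Type*} {T : ℕ → α → α}

theorem mapsTo_backwardTraj {s : Set α} (h : ∀ i, MapsTo (T i) s s) (k : ℕ) :
    MapsTo (backwardTraj T k) s s := by
  induction k with
  | zero => exact mapsTo_id s
  | succ k ih => exact ih.comp (h k)

theorem lipschitzWith_backwardTraj [PseudoEMetricSpace α] {K : ℕ → ℝ≥0}
    (h : ∀ i, LipschitzWith (K i) (T i)) (k : ℕ) :
    LipschitzWith (∏ i ∈ Finset.range k, K i) (backwardTraj T k) := by
  induction k with
  | zero => simpa [backwardTraj] using LipschitzWith.id
  | succ k ih => rw [Finset.prod_range_succ]; exact ih.comp (h k)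

variable [PseudoMetricSpace α] {K : ℕ → ℝ≥0}

theorem dist_backwardTraj_le (h : ∀ i, LipschitzWith (K i) (T i)) (k : ℕ) (a b : α) :
    dist (backwardTraj T k a) (backwardTraj T k b) ≤ (∏ i ∈ Finset.range k, (K i : ℝ)) * dist a b :=
  by simpa using (lipschitzWith_backwardTraj h k).dist_le_mul a b

theorem cauchySeq_backwardTraj (h : ∀ i, LipschitzWith (K i) (T i))
    (hK : Summable fun k => ∏ i ∈ Finset.range k, (K i : ℝ)) {s : Set α}
    (hmaps : ∀ i, MapsTo (T i) s s) (hs : Bornology.IsBounded s) {a : α} (ha : a ∈ s) :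
    CauchySeq fun k => backwardTraj T k a := by
  refine cauchySeq_of_dist_le_of_summable _ (fun k => ?_) (hK.mul_right (diam s))
  calc dist (backwardTraj T k a) (backwardTraj T k (T k a))
      ≤ (∏ i ∈ Finset.range k, (K i : ℝ)) * dist a (T k a) := dist_backwardTraj_le h k _ _
    _ ≤ (∏ i ∈ Finset.range k, (K i : ℝ)) * diam s := by
        gcongr; exact dist_le_diam_of_mem hs ha (hmaps k ha)

theorem tendsto_dist_backwardTraj (h : ∀ i, LipschitzWith (K i) (T i))
    (hK : Tendsto (fun k => ∏ i ∈ Finset.range k, (K i : ℝ)) atTop (𝓝 0)) (a b : α) :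
    Tendsto (fun k => dist (backwardTraj T k a) (backwardTraj T k b)) atTop (𝓝 0) :=
  squeeze_zero (fun _ => dist_nonneg) (fun k => dist_backwardTraj_le h k a b)
    (by simpa using hK.mul_const (dist a b))

end BackwardTrajectory

theorem existsUnique_tendsto_backwardTraj {α : Type*} [MetricSpace α] {T : ℕ → α → α}
    {K : ℕ → ℝ≥0} (h : ∀ i, LipschitzWith (K i) (T i))
    (hK : Summable fun k => ∏ i ∈ Finset.range k, (K i : ℝ)) {s : Set α}
    (hmaps : ∀ i, MapsTo (T i) s s) (hs : IsCompact s) (hne : s.Nonempty) :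
    ∃! p, p ∈ s ∧ ∀ a ∈ s, Tendsto (fun k => backwardTraj T k a) atTop (𝓝 p) := by
  obtain ⟨a₀, ha₀⟩ := hne
  obtain ⟨p, hp, hlim⟩ := cauchySeq_tendsto_of_isComplete hs.isComplete
    (fun k => mapsTo_backwardTraj hmaps k ha₀) (cauchySeq_backwardTraj h hK hmaps hs.isBounded ha₀)
  refine ⟨p, ⟨hp, fun a _ => hlim.congr_dist ?_⟩, fun q ⟨_, hq⟩ => ?_⟩
  · exact tendsto_dist_backwardTraj h hK.tendsto_atTop_zero a₀ a
  · exact tendsto_nhds_unique (hq a₀ ha₀) hlim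

theorem backward_SFS_trajectories_converge_general
    {X : Type*} [MetricSpace X]
    (n : ℕ → ℕ)
    (f : (i : ℕ) → Fin (n i) → X → X) (L : ℕ → NNReal)
    (hf : ∀ i r, LipschitzWith (L i) (f i r))
    (C : Set X) (hCc : IsCompact C) (hCne : C.Nonempty)
    (hinv : ∀ i r, Set.MapsTo (f i r) C C)
    (hsum : Summable fun k => ∏ i ∈ Finset.range (k + 1), (L i : ℝ))
    (F : ℕ → NonemptyCompacts X → NonemptyCompacts X)
    (hF : ∀ i (B : NonemptyCompacts X), (F i B : Set X) = ⋃ r, f i r '' (B : Set X)) :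
    ∃! P : NonemptyCompacts X, (P : Set X) ⊆ C ∧
      ∀ A : NonemptyCompacts X, (A : Set X) ⊆ C →
        Tendsto (fun k => backwardTraj F k A) atTop (𝓝 P) := by
  have hmaps : ∀ i, MapsTo (F i) {A : NonemptyCompacts X | ↑A ⊆ C} {A | ↑A ⊆ C} :=
    fun i A hA => by
      simp only [mem_ofPred_eq, hF]
      exact iUnion_subset fun r => (image_mono hA).trans (hinv i r).image_subset
  exact existsUnique_tendsto_backwardTraj
    (fun i => NonemptyCompacts.lipschitzWith_of_coe_eq_iUnion_image (hf i) (hF i))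
    ((summable_nat_add_iff 1).1 hsum) hmaps (NonemptyCompacts.isCompact_subsets_of_isCompact hCc)
    ⟨⟨⟨C, hCc⟩, hCne⟩, fun _ hx => hx⟩

/-- (Corollary `backSFS`, convergence of backward SFS trajectories): for a sequence of
function systems `𝓕ᵢ = {f_{1,i},…,f_{nᵢ,i}}` of Lipschitz maps with contraction factors
`Lᵢ`, a compact invariant set `C`, and `∑_{k=1}^∞ ∏_{i=1}^k Lᵢ < ∞`, the backward SFS
trajectories converge, for every nonempty compact initial set `A ⊆ C`, to one and the
same attractor `P ⊆ C`. -/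
theorem backward_SFS_trajectories_converge
    {X : Type*} [MetricSpace X] [CompleteSpace X]
    (n : ℕ → ℕ) (hn : ∀ i, 0 < n i)
    (f : (i : ℕ) → Fin (n i) → X → X) (L : ℕ → NNReal)
    (hf : ∀ i r, LipschitzWith (L i) (f i r))
    (C : Set X) (hCc : IsCompact C) (hCne : C.Nonempty)
    (hinv : ∀ i r, Set.MapsTo (f i r) C C)
    (hsum : Summable fun k => ∏ i ∈ Finset.range (k + 1), (L i : ℝ))
    (F : ℕ → NonemptyCompacts X → NonemptyCompacts X)
    (hF : ∀ i (B : NonemptyCompacts X), (F i B : Set X) = ⋃ r, f i r '' (B : Set X)) :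
    ∃! P : NonemptyCompacts X, (P : Set X) ⊆ C ∧
      ∀ A : NonemptyCompacts X, (A : Set X) ⊆ C →
        Tendsto (fun k => backwardTraj F k A) atTop (𝓝 P) :=
  backward_SFS_trajectories_converge_general n f L hf C hCc hCne hinv hsum F hF
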